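/- arXiv:1104.5261 — 6 statements merged into one kernel-verified Lean document; each statement's English description precedes it below -/
import Mathlib

section
/- For every r ≥ 4, if G is a K_r-saturated graph (G contains no copy of K_r, and for every non-edge e of G, the graph G + e contains a copy of K_r) on at least r+1 vertices, then G is (r-2)-connected. -/
/-- For every r ≥ 4, a K_r-saturated graph on at least r+1 vertices is (r-2)-connected:
removing any set of fewer than r-2 vertices leaves a connected graph on at least 2 vertices. -/
theorem stmt0 {V : Type*} [Fintype V] [DecidableEq V] (r : ℕ) (hr : 4 ≤ r)
    (G : SimpleGraph V)
    (hfree : G.CliqueFree r)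
    (hsat : ∀ u v : V, u ≠ v → ¬ G.Adj u v →
      ∃ s : Finset V, (G ⊔ SimpleGraph.fromEdgeSet {s(u, v)}).IsNClique r s)
    (hcard : r + 1 ≤ Fintype.card V) :
    ∀ S : Finset V, S.card < r - 2 →
      (G.induce ((↑S : Set V)ᶜ)).Connected ∧ 2 ≤ Nat.card ((↑S : Set V)ᶜ : Set V) := by
  intro S hS
  have hSV : S.card ≤ Fintype.card V := Finset.card_le_univ S
  have h2 : 2 ≤ Nat.card ((↑S : Set V)ᶜ : Set V) := by
    rw [← Finset.coe_compl, Nat.card_eq_fintype_card]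
    simp only [Finset.coe_sort_coe, Fintype.card_coe, Finset.card_compl]
    omega
  -- key: for nonadjacent distinct u v outside S there is a common neighbor outside S
  have key : ∀ u v : V, u ∉ S → v ∉ S → u ≠ v → ¬ G.Adj u v →
      ∃ w : V, w ∉ S ∧ G.Adj u w ∧ G.Adj w v := by
    intro u v hu hv huv hadj
    obtain ⟨s, hclq, hcards⟩ := hsat u v huv hadj
    have hedge : ∀ a b : V, a ∈ s → b ∈ s → a ≠ b → ¬(s(a, b) = s(u, v)) → G.Adj a b := by
      intro a b ha hb hab hne
      rcases hclq (Finset.mem_coe.mpr ha) (Finset.mem_coe.mpr hb) hab with h | h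
      · exact h
      · rw [SimpleGraph.fromEdgeSet_adj] at h
        exact absurd (Set.mem_singleton_iff.mp h.1) hne
    have hu_mem : u ∈ s := by
      by_contra h
      refine hfree s ⟨?_, hcards⟩
      intro a ha b hb hab
      refine hedge a b (Finset.mem_coe.mp ha) (Finset.mem_coe.mp hb) hab ?_
      intro he
      rw [Sym2.eq_iff] at he
      rcases he with ⟨rfl, rfl⟩ | ⟨rfl, rfl⟩
      · exact h ha
      · exact h hb
    have hv_mem : v ∈ s := by
      by_contra h
      refine hfree s ⟨?_, hcards⟩
      intro a ha b hb hab
      refine hedge a b (Finset.mem_coe.mp ha) (Finset.mem_coe.mp hb) hab ?_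
      intro he
      rw [Sym2.eq_iff] at he
      rcases he with ⟨rfl, rfl⟩ | ⟨rfl, rfl⟩
      · exact h hb
      · exact h ha
    have htcard : ((s.erase u).erase v).card = r - 2 := by
      rw [Finset.card_erase_of_mem (Finset.mem_erase.mpr ⟨Ne.symm huv, hv_mem⟩),
        Finset.card_erase_of_mem hu_mem, hcards]
      omega
    have hnots : ¬ (s.erase u).erase v ⊆ S := by
      intro hsub
      have := Finset.card_le_card hsub
      omega
    obtain ⟨w, hwt, hwS⟩ := Finset.not_subset.mp hnots
    have hwv : w ≠ v := Finset.ne_of_mem_erase hwt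
    have hwt' : w ∈ s.erase u := Finset.mem_of_mem_erase hwt
    have hwu : w ≠ u := Finset.ne_of_mem_erase hwt'
    have hws : w ∈ s := Finset.mem_of_mem_erase hwt'
    refine ⟨w, hwS, ?_, ?_⟩
    · refine hedge u w hu_mem hws (Ne.symm hwu) ?_
      intro he
      rw [Sym2.eq_iff] at he
      rcases he with ⟨_, h⟩ | ⟨h, _⟩
      · exact hwv h
      · exact huv h
    · refine hedge w v hws hv_mem hwv ?_
      intro he
      rw [Sym2.eq_iff] at he
      rcases he with ⟨h, _⟩ | ⟨_, h⟩
      · exact hwu h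
      · exact huv h.symm
  have hne : Nonempty ((↑S : Set V)ᶜ : Set V) := (Nat.card_pos_iff.mp (by omega)).1
  refine ⟨⟨?_⟩, h2⟩
  · -- preconnected
    rintro ⟨u, hu⟩ ⟨v, hv⟩
    have hu' : u ∉ S := by simpa using hu
    have hv' : v ∉ S := by simpa using hv
    by_cases heq : u = v
    · subst heq; rfl
    by_cases hadj : G.Adj u v
    · exact SimpleGraph.Adj.reachable
        (show (G.induce ((↑S : Set V)ᶜ)).Adj ⟨u, hu⟩ ⟨v, hv⟩ from hadj)
    · obtain ⟨w, hwS, h1, h2'⟩ := key u v hu' hv' heq hadj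
      have hw : w ∈ ((↑S : Set V)ᶜ) := by simpa using hwS
      exact (SimpleGraph.Adj.reachable
          (show (G.induce ((↑S : Set V)ᶜ)).Adj ⟨u, hu⟩ ⟨w, hw⟩ from h1)).trans
        (SimpleGraph.Adj.reachable
          (show (G.induce ((↑S : Set V)ᶜ)).Adj ⟨w, hw⟩ ⟨v, hv⟩ from h2'))
end

section
/- For every r ≥ 3, the complement of the cycle C_{2r-1} is uniquely K_r-saturated: it contains no K_r, and adding any edge of the cycle to its complement creates exactly one copy of K_r. -/
/-- `G` is uniquely `K_r`-saturated: it has no `r`-clique, and for each non-adjacent pair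
`u ≠ v`, the graph obtained by adding the edge `uv` has exactly one `r`-clique. -/
def SimpleGraph.UniquelyKSat {V : Type*} (G : SimpleGraph V) (r : ℕ) : Prop :=
  G.CliqueFree r ∧ ∀ u v : V, u ≠ v → ¬ G.Adj u v →
    ∃! s : Finset V, (G ⊔ SimpleGraph.fromEdgeSet {s(u, v)}).IsNClique r s

/-- The complement of the cycle on `m` vertices: `i` adjacent to `j` iff `i ≠ j` and
`i - j ≢ ±1 (mod m)`. -/
def cycleComplement (m : ℕ) : SimpleGraph (ZMod m) where
  Adj i j := i ≠ j ∧ i - j ≠ 1 ∧ j - i ≠ 1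
  symm := ⟨fun _ _ h => ⟨h.1.symm, h.2.2, h.2.1⟩⟩
  loopless := ⟨fun _ h => h.1 rfl⟩

/-!
A clique `s` of the complement of the cycle on `ZMod m` is an independent set of the cycle, so
`s` and `s + 1` are disjoint and `2 |s| ≤ m`; for `m = 2r - 1` there is no `K_r`.
After adding the edge `u(u+1)`, every `r`-clique `s` contains `u` (otherwise it is already a
clique), and `s \ {u}` is a clique of size `(m - 1) / 2` avoiding `u` and `u - 1`. Then `s \ {u}`
and its shift by one cover everything except `u`, which forces `s \ {u}` to alternate:
`s = {u + 1, u + 3, …, u + 2r - 1 = u}`. Conversely this set is an `r`-clique of the new graph.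
-/

open Finset SimpleGraph

section CycleComplement

variable {m : ℕ}

lemma ZMod.natCast_ne_zero_of_pos_of_lt {n : ℕ} (h0 : 0 < n) (hn : n < m) :
    (n : ZMod m) ≠ 0 := by
  rw [Ne, ZMod.natCast_eq_zero_iff]
  exact Nat.not_dvd_of_pos_of_lt h0 hn

lemma cycleComplement_not_adj_add_one (x : ZMod m) : ¬ (cycleComplement m).Adj x (x + 1) :=
  fun h => h.2.2 (add_sub_cancel_left x 1)

lemma cycleComplement_not_adj_iff {u v : ZMod m} (huv : u ≠ v) :
    ¬ (cycleComplement m).Adj u v ↔ v = u + 1 ∨ u = v + 1 := by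
  simp only [cycleComplement, huv, ne_eq, not_false_eq_true, true_and, not_and_or, not_not,
    sub_eq_iff_eq_add, add_comm (1 : ZMod m)]
  exact or_comm

lemma cycleComplement_adj_add_natCast {d : ℕ} (hd : 2 ≤ d) (hdm : d + 2 ≤ m) (x : ZMod m) :
    (cycleComplement m).Adj x (x + d) := by
  obtain ⟨e, rfl⟩ : ∃ e, d = e + 1 := ⟨d - 1, by omega⟩
  have hd0 := ZMod.natCast_ne_zero_of_pos_of_lt (m := m) (n := e + 1) (by omega) (by omega)
  have hd1 := ZMod.natCast_ne_zero_of_pos_of_lt (m := m) (n := e + 2) (by omega) (by omega)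
  have he := ZMod.natCast_ne_zero_of_pos_of_lt (m := m) (n := e) (by omega) (by omega)
  push_cast at hd0 hd1 ⊢
  exact ⟨fun h => hd0 (by linear_combination -h), fun h => hd1 (by linear_combination -h),
    fun h => he (by linear_combination h)⟩

def alternatingFinset (w : ZMod m) (n : ℕ) : Finset (ZMod m) :=
  (range n).image fun k => w + 1 + (2 * k : ℕ)

variable [Fact (1 < m)]

lemma cycleComplement_isClique_add_one_notMem {s : Finset (ZMod m)}
    (hs : (cycleComplement m).IsClique (s : Set (ZMod m))) {x : ZMod m} (hx : x ∈ s) :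
    x + 1 ∉ s :=
  fun hx1 => cycleComplement_not_adj_add_one x (hs hx hx1 (succ_ne_self x).symm)

lemma cycleComplement_isClique_card_union_image_add_one {s : Finset (ZMod m)}
    (hs : (cycleComplement m).IsClique (s : Set (ZMod m))) :
    #(s ∪ s.image (· + 1)) = 2 * #s := by
  have hdisj : Disjoint s (s.image (· + 1)) := by
    simp only [disjoint_right, mem_image]
    rintro _ ⟨y, hy, rfl⟩
    exact cycleComplement_isClique_add_one_notMem hs hy
  rw [card_union_of_disjoint hdisj, card_image_of_injective _ (add_left_injective 1), two_mul]

lemma cycleComplement_isClique_two_mul_card_le {s : Finset (ZMod m)}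
    (hs : (cycleComplement m).IsClique (s : Set (ZMod m))) : 2 * #s ≤ m := by
  rw [← cycleComplement_isClique_card_union_image_add_one hs]
  exact (card_le_univ _).trans_eq (ZMod.card m)

lemma cycleComplement_isClique_eq_alternatingFinset {s : Finset (ZMod m)} {w : ZMod m}
    (hs : (cycleComplement m).IsClique (s : Set (ZMod m))) (hm : 2 * #s + 1 = m)
    (hw : w ∉ s) (hw' : w - 1 ∉ s) : s = alternatingFinset w #s := by
  have hcover : ∀ x ≠ w, x ∈ s ∨ x - 1 ∈ s := by
    have hsub : s ∪ s.image (· + 1) ⊆ univ.erase w := by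
      intro x hx
      refine mem_erase.2 ⟨?_, mem_univ x⟩
      rintro rfl
      rcases mem_union.1 hx with hx | hx
      · exact hw hx
      · obtain ⟨y, hy, hyx⟩ := mem_image.1 hx
        exact hw' (by rwa [← hyx, add_sub_cancel_right])
    have hunion : s ∪ s.image (· + 1) = univ.erase w := by
      refine eq_of_subset_of_card_le hsub ?_
      rw [cycleComplement_isClique_card_union_image_add_one hs, card_erase_of_mem (mem_univ w),
        card_univ, ZMod.card]
      omega
    intro x hx
    have hx : x ∈ s ∪ s.image (· + 1) := hunion ▸ mem_erase.2 ⟨hx, mem_univ x⟩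
    simp only [mem_union, mem_image] at hx
    rcases hx with hx | ⟨y, hy, rfl⟩
    · exact .inl hx
    · exact .inr (by rwa [add_sub_cancel_right])
  have hparity : ∀ j : ℕ, j + 1 < m → (w + 1 + j ∈ s ↔ Even j) := by
    intro j
    induction j with
    | zero =>
      intro _
      simpa using (hcover (w + 1) (succ_ne_self w)).resolve_right (by simpa using hw)
    | succ j ih =>
      intro hj
      have hne : w + 1 + ((j + 1 : ℕ) : ZMod m) ≠ w := by
        intro h
        apply ZMod.natCast_ne_zero_of_pos_of_lt (n := j + 2) (by omega) hj
        push_cast at h ⊢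
        linear_combination h
      have hprev : w + 1 + ((j + 1 : ℕ) : ZMod m) - 1 = w + 1 + j := by push_cast; ring
      rw [Nat.even_add_one, ← ih (by omega), ← hprev]
      constructor
      · intro hx hx'
        exact cycleComplement_isClique_add_one_notMem hs hx' (by rwa [sub_add_cancel])
      · exact (hcover _ hne).resolve_right
  refine eq_of_subset_of_card_le (fun x hx => ?_) (card_image_le.trans (card_range _).le)
  set j := (x - (w + 1)).val
  have hx' : w + 1 + j = x := by simp [j]
  have hj : j + 1 < m := by
    refine lt_of_le_of_ne (ZMod.val_lt _) fun hj => hw ?_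
    have : w + 1 + j = w + ((j + 1 : ℕ) : ZMod m) := by push_cast; ring
    rwa [← hx', this, hj, ZMod.natCast_self, add_zero] at hx
  obtain ⟨k, hk⟩ := (hparity j hj).1 (hx' ▸ hx)
  exact mem_image.2 ⟨k, mem_range.2 (by omega), by rw [← hx', hk, two_mul]⟩

lemma cycleComplement_cliqueFree_of_lt_two_mul {r : ℕ} (h : m < 2 * r) :
    (cycleComplement m).CliqueFree r :=
  fun s hs => by
    have := cycleComplement_isClique_two_mul_card_le hs.1
    rw [hs.card_eq] at this
    omega

variable {r : ℕ}

lemma alternatingFinset_isNClique_sup_edge (hr : 2 ≤ r) (hm : m + 1 = 2 * r) (u : ZMod m) :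
    (cycleComplement m ⊔ edge u (u + 1)).IsNClique r (alternatingFinset u r) := by
  set f : ℕ → ZMod m := fun k => u + 1 + (2 * k : ℕ)
  have hadj : ∀ k₁ k₂, k₁ < k₂ → k₂ < r →
      (cycleComplement m ⊔ edge u (u + 1)).Adj (f k₁) (f k₂) := by
    intro k₁ k₂ hlt hk₂
    obtain ⟨d, rfl⟩ := Nat.exists_eq_add_of_lt hlt
    by_cases hend : k₁ = 0 ∧ d + 1 = r - 1
    · obtain ⟨rfl, hd⟩ := hend
      have hcast : ((2 * (0 + d + 1) : ℕ) : ZMod m) + 1 = 0 := by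
        rw [← Nat.cast_add_one, show 2 * (0 + d + 1) + 1 = m by omega, ZMod.natCast_self]
      have hlast : f (0 + d + 1) = u := by simp only [f]; linear_combination hcast
      rw [hlast, show f 0 = u + 1 by simp [f]]
      exact .inr ((edge_adj ..).2 ⟨.inr ⟨rfl, rfl⟩, succ_ne_self u⟩)
    · have hstep : f (k₁ + d + 1) = f k₁ + (2 * (d + 1) : ℕ) := by
        simp only [f]; push_cast; ring
      exact hstep ▸ .inl (cycleComplement_adj_add_natCast (by omega) (by omega) _)
  have hinj : Set.InjOn f (range r) := by
    intro k₁ hk₁ k₂ hk₂ h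
    have h2 := congrArg ZMod.val (add_left_cancel h)
    rw [mem_coe, mem_range] at hk₁ hk₂
    rw [ZMod.val_natCast_of_lt (by omega), ZMod.val_natCast_of_lt (by omega)] at h2
    omega
  refine ⟨fun a ha b hb hab => ?_, card_image_of_injOn hinj |>.trans (card_range r)⟩
  obtain ⟨k₁, hk₁, rfl⟩ := mem_image.1 ha
  obtain ⟨k₂, hk₂, rfl⟩ := mem_image.1 hb
  rw [mem_range] at hk₁ hk₂
  rcases lt_or_gt_of_ne (ne_of_apply_ne f hab) with h | h
  · exact hadj k₁ k₂ h hk₂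
  · exact (hadj k₂ k₁ h hk₁).symm

lemma cycleComplement_sup_edge_isNClique_eq (hr : 2 ≤ r) (hm : m + 1 = 2 * r) {u : ZMod m}
    {s : Finset (ZMod m)} (hs : (cycleComplement m ⊔ edge u (u + 1)).IsNClique r s) :
    s = alternatingFinset u r := by
  have hu : u ∈ s :=
    (cycleComplement_cliqueFree_of_lt_two_mul (m := m) (by omega)).mem_of_sup_edge_isNClique hs
  have hs' := hs.erase_of_sup_edge_of_mem hu
  have hu' : u - 1 ∉ s := by
    intro h
    rcases hs.1 h hu (pred_ne_self u) with hadj | hadj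
    · exact cycleComplement_not_adj_add_one (u - 1) (by rwa [sub_add_cancel])
    · rcases ((edge_adj ..).1 hadj).1 with ⟨h, -⟩ | ⟨h, -⟩
      · exact pred_ne_self u h
      · exact ZMod.natCast_ne_zero_of_pos_of_lt (m := m) (n := 2) two_pos (by omega)
          (by push_cast; linear_combination -h)
  have h := cycleComplement_isClique_eq_alternatingFinset hs'.1 (by rw [hs'.card_eq]; omega)
    (notMem_erase u s) (fun h => hu' (mem_of_mem_erase h))
  have hlast : u + 1 + ((2 * (r - 1) : ℕ) : ZMod m) = u := by
    have : ((2 * (r - 1) : ℕ) : ZMod m) + 1 = 0 := by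
      rw [← Nat.cast_add_one, show 2 * (r - 1) + 1 = m by omega, ZMod.natCast_self]
    linear_combination this
  rw [hs'.card_eq] at h
  obtain ⟨n, rfl⟩ : ∃ n, r = n + 1 := ⟨r - 1, by omega⟩
  rw [Nat.add_sub_cancel] at h hlast
  rw [← insert_erase hu, h, alternatingFinset, alternatingFinset, range_add_one, image_insert,
    hlast]

lemma cycleComplement_existsUnique_isNClique_sup_edge (hr : 2 ≤ r) (hm : m + 1 = 2 * r)
    (u : ZMod m) : ∃! s, (cycleComplement m ⊔ edge u (u + 1)).IsNClique r s :=
  ⟨_, alternatingFinset_isNClique_sup_edge hr hm u,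
    fun _ hs => cycleComplement_sup_edge_isNClique_eq hr hm hs⟩

end CycleComplement

/-- For every `r ≥ 3`, the complement of the cycle `C_{2r-1}` is uniquely
`K_r`-saturated. -/
theorem stmt2 (r : ℕ) (hr : 3 ≤ r) :
    (cycleComplement (2 * r - 1)).UniquelyKSat r := by
  have : Fact (1 < 2 * r - 1) := ⟨by omega⟩
  have hm : 2 * r - 1 + 1 = 2 * r := by omega
  refine ⟨cycleComplement_cliqueFree_of_lt_two_mul (by omega), fun u v huv hnadj => ?_⟩
  rcases (cycleComplement_not_adj_iff huv).1 hnadj with rfl | rfl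
  · exact cycleComplement_existsUnique_isNClique_sup_edge (by omega) hm u
  · rw [Sym2.eq_swap]
    exact cycleComplement_existsUnique_isNClique_sup_edge (by omega) hm v
end

section
/- If G is a uniquely K_r-saturated graph with a dominating vertex v (for r ≥ 3), then G - v is uniquely K_{r-1}-saturated. -/
section Aux

open SimpleGraph Finset

variable {V : Type*} {v : V}

private lemma clique_up [DecidableEq V] {G' : SimpleGraph V} {G'' : SimpleGraph ↑{u : V | u ≠ v}}
    (hcompat : ∀ a b : ↑{u : V | u ≠ v}, G''.Adj a b ↔ G'.Adj ↑a ↑b)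
    (hd : ∀ x : V, x ≠ v → G'.Adj v x)
    {n : ℕ} {t : Finset ↑{u : V | u ≠ v}} (ht : G''.IsNClique n t) :
    G'.IsNClique (n + 1) (insert v (t.map (Function.Embedding.subtype _))) := by
  classical
  obtain ⟨hc, hcard⟩ := ht
  have hvnot : v ∉ t.map (Function.Embedding.subtype _) := by
    intro h
    obtain ⟨⟨x, hx⟩, -, he⟩ := Finset.mem_map.mp h
    exact hx he
  constructor
  · intro a ha b hb hab
    simp only [Finset.coe_insert, Set.mem_insert_iff, Finset.mem_coe, Finset.mem_map,
      Function.Embedding.coe_subtype] at ha hb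
    rcases ha with rfl | ⟨a', ha', rfl⟩
    · rcases hb with rfl | ⟨b', hb', rfl⟩
      · exact absurd rfl hab
      · exact hd _ b'.2
    · rcases hb with rfl | ⟨b', hb', rfl⟩
      · exact (hd _ a'.2).symm
      · refine (hcompat a' b').mp (hc ha' hb' ?_)
        intro h; exact hab (by rw [h])
  · rw [Finset.card_insert_of_notMem hvnot, Finset.card_map, hcard]

private lemma clique_down [DecidableEq V] {G' : SimpleGraph V}
    {G'' : SimpleGraph ↑{u : V | u ≠ v}}
    (hcompat : ∀ a b : ↑{u : V | u ≠ v}, G''.Adj a b ↔ G'.Adj ↑a ↑b)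
    {n : ℕ} {s : Finset V} (hs : G'.IsNClique (n + 1) s) (hv : v ∈ s) :
    G''.IsNClique n ((s.erase v).subtype (· ∈ {u : V | u ≠ v})) := by
  have hfilter : (s.erase v).filter (· ∈ {u : V | u ≠ v}) = s.erase v := by
    apply Finset.filter_true_of_mem
    intro x hx
    exact Finset.ne_of_mem_erase hx
  constructor
  · intro a ha b hb hab
    simp only [Finset.mem_coe, Finset.mem_subtype] at ha hb
    refine (hcompat a b).mpr (hs.1 ?_ ?_ ?_)
    · exact Finset.mem_of_mem_erase ha
    · exact Finset.mem_of_mem_erase hb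
    · exact fun h => hab (Subtype.ext h)
  · rw [Finset.card_subtype, hfilter, Finset.card_erase_of_mem hv, hs.2]
    omega

private lemma map_subtype_erase [DecidableEq V] (s : Finset V) :
    ((s.erase v).subtype (· ∈ {u : V | u ≠ v})).map (Function.Embedding.subtype _)
      = s.erase v := by
  rw [Finset.subtype_map]
  apply Finset.filter_true_of_mem
  intro x hx
  exact Finset.ne_of_mem_erase hx

end Aux

/-- If G is uniquely K_r-saturated (r ≥ 3) with a dominating vertex v, then G - v is
uniquely K_{r-1}-saturated. -/
theorem stmt5 {V : Type*} (r : ℕ) (hr : 3 ≤ r) (G : SimpleGraph V)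
    (hG : G.UniquelyKSat r) (v : V) (hdom : ∀ u : V, u ≠ v → G.Adj v u) :
    (G.induce {u : V | u ≠ v}).UniquelyKSat (r - 1) := by
  classical
  obtain ⟨hfree, hsat⟩ := hG
  have hr' : r - 1 + 1 = r := by omega
  set H := G.induce {u : V | u ≠ v} with hH
  have hHcompat : ∀ a b : ↑{u : V | u ≠ v}, H.Adj a b ↔ G.Adj ↑a ↑b := by
    intro a b; simp [hH]
  constructor
  · -- clique-free
    intro t ht
    have := clique_up hHcompat hdom ht
    rw [hr'] at this
    exact hfree _ this
  · intro u w huw hadj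
    have hcuw : (u : V) ≠ (w : V) := fun h => huw (Subtype.ext h)
    have hGadj : ¬ G.Adj ↑u ↑w := fun h => hadj ((hHcompat u w).mpr h)
    obtain ⟨s, hs, huniq⟩ := hsat ↑u ↑w hcuw hGadj
    set G' := G ⊔ SimpleGraph.fromEdgeSet {s(↑u, ↑w)} with hG'
    set H' := H ⊔ SimpleGraph.fromEdgeSet {s(u, w)} with hH'
    have hcompat : ∀ a b : ↑{u : V | u ≠ v}, H'.Adj a b ↔ G'.Adj ↑a ↑b := by
      intro a b
      simp only [hH', hG', SimpleGraph.sup_adj, SimpleGraph.fromEdgeSet_adj,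
        Set.mem_singleton_iff, hHcompat, Sym2.eq_iff, Subtype.ext_iff]
      constructor
      · rintro (h | ⟨h | h, hab⟩)
        · exact Or.inl h
        · exact Or.inr ⟨Or.inl ⟨h.1, h.2⟩, fun he => hab (Subtype.ext he)⟩
        · exact Or.inr ⟨Or.inr ⟨h.1, h.2⟩, fun he => hab (Subtype.ext he)⟩
      · rintro (h | ⟨h | h, hab⟩)
        · exact Or.inl h
        · exact Or.inr ⟨Or.inl ⟨h.1, h.2⟩, fun he => hab (congrArg _ he)⟩
        · exact Or.inr ⟨Or.inr ⟨h.1, h.2⟩, fun he => hab (congrArg _ he)⟩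
    have hd' : ∀ x : V, x ≠ v → G'.Adj v x := fun x hx => Or.inl (hdom x hx)
    -- s contains u and w
    have hmem : ∀ a b : V, (s(a, b) : Sym2 V) = s(↑u, ↑w) →
        (a = ↑u ∧ b = ↑w) ∨ (a = ↑w ∧ b = ↑u) := by
      intro a b h; rwa [Sym2.eq_iff] at h
    have hus : (u : V) ∈ s ∧ (w : V) ∈ s := by
      by_contra hcon
      -- then s is a clique in G
      apply hfree s
      refine ⟨?_, hs.2⟩
      intro a ha b hb hab
      rcases hs.1 ha hb hab with h | ⟨he, _⟩
      · exact h
      · exfalso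
        rcases hmem a b he with ⟨rfl, rfl⟩ | ⟨rfl, rfl⟩ <;>
          exact hcon ⟨by assumption, by assumption⟩
    -- v ∈ s
    have hvs : v ∈ s := by
      by_contra hvs
      have hcard2 : (({(↑u : V), ↑w} : Finset V)).card ≤ 2 :=
        (Finset.card_insert_le _ _).trans (by simp)
      have hsd : (s \ {(↑u : V), ↑w}).Nonempty := by
        rw [← Finset.card_pos]
        have := Finset.le_card_sdiff ({(↑u : V), ↑w}) s
        have hc := hs.2
        omega
      obtain ⟨x, hx⟩ := hsd
      rw [Finset.mem_sdiff] at hx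
      obtain ⟨hxs, hxuw⟩ := hx
      simp only [Finset.mem_insert, Finset.mem_singleton, not_or] at hxuw
      have hclique' : G'.IsNClique r (insert v (s.erase x)) := by
        constructor
        · intro a ha b hb hab
          simp only [Finset.coe_insert, Set.mem_insert_iff, Finset.mem_coe] at ha hb
          rcases ha with rfl | ha
          · rcases hb with rfl | hb
            · exact absurd rfl hab
            · exact hd' _ (fun h => hvs (h ▸ Finset.mem_of_mem_erase hb))
          · rcases hb with rfl | hb
            · exact (hd' _ (fun h => hvs (h ▸ Finset.mem_of_mem_erase ha))).symm
            · exact hs.1 (Finset.mem_of_mem_erase ha) (Finset.mem_of_mem_erase hb) hab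
        · have hvne : v ∉ s.erase x := fun h => hvs (Finset.mem_of_mem_erase h)
          rw [Finset.card_insert_of_notMem hvne, Finset.card_erase_of_mem hxs, hs.2]
          omega
      have := huniq _ hclique'
      apply hvs
      rw [← this]
      exact Finset.mem_insert_self v _
    -- now push down
    have hvu : v ≠ (u : V) := fun h => u.2 h.symm
    refine ⟨(s.erase v).subtype (· ∈ {u : V | u ≠ v}), clique_down hcompat (hr' ▸ hs) hvs, ?_⟩
    intro t ht
    have hup := clique_up hcompat hd' ht
    rw [hr'] at hup
    have hst := huniq _ hup
    have hvmap : v ∉ t.map (Function.Embedding.subtype _) := by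
      intro h
      obtain ⟨⟨x, hx⟩, -, he⟩ := Finset.mem_map.mp h
      exact hx he
    apply Finset.map_injective (Function.Embedding.subtype _)
    rw [map_subtype_erase, ← hst, Finset.erase_insert hvmap]
end

section
/- If G and H are graphs on the same vertex set with the same number of edges, and G has strictly more than (1/2) * C(n,2) edges where n is the number of vertices, then G and H having isomorphic edge decks implies G and H are isomorphic. (Lovász density criterion: a graph on n vertices with more than half the possible edges is edge reconstructible.) -/
/-!
Lovász's counting argument. For finite subsets `A`, `B` of a `Γ`-set let `t(A, B)` count the
`g ∈ Γ` with `g • A ⊆ B`. If every translate of `A` lies in `B ∪ C` with `B`, `C` disjoint,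
inclusion–exclusion over the part of `g • A` that falls into `C` gives
`t(A, B) = ∑ₖ (-1)ᵏ wₖ(A)`, where `wₖ(A)` sums `t(F, C)` over the `k`-subsets `F` of `A`.
Every `k`-subset of `A` lies in `A.erase a` for exactly `#A - k` elements `a` (Kelly's lemma),
so for `k < #A` the deck `{A.erase a}` determines `wₖ(A)`, while `wₖ(A) = 0` for `k > #C`.
Taking `C` to be the non-edges of `H`, density gives `#C < #A`, hence
`t(E(G), E(H)) = t(E(H), E(H)) > 0`, and a permutation mapping `E(G)` onto `E(H)` is an
isomorphism.
-/

open Finset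
open scoped Pointwise

namespace Finset

variable {α M : Type*} [DecidableEq α] [AddCommMonoid M]

theorem sum_sum_powersetCard_erase (s : Finset α) (k : ℕ) (f : Finset α → M) :
    ∑ a ∈ s, ∑ t ∈ (s.erase a).powersetCard k, f t = (#s - k) • ∑ t ∈ s.powersetCard k, f t := by
  rw [sum_comm' (t' := s.powersetCard k) (s' := fun t => s \ t), smul_sum]
  · refine sum_congr rfl fun t ht => ?_
    obtain ⟨hts, htk⟩ := mem_powersetCard.1 ht
    rw [sum_const, card_sdiff_of_subset hts, htk]
  · intro a t
    simp only [mem_powersetCard, subset_erase, mem_sdiff]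
    tauto

end Finset

section Transporter

variable {Γ α : Type*} [Group Γ] [MulAction Γ α] [DecidableEq α] {A B C : Finset α} {k : ℕ}

theorem ite_smul_finset_subset_eq_sum_powerset {g : Γ} (hBC : Disjoint B C)
    (hA : g • A ⊆ B ∪ C) :
    (if g • A ⊆ B then 1 else 0 : ℤ) =
      ∑ F ∈ A.powerset, if g • F ⊆ C then (-1 : ℤ) ^ #F else 0 := by
  have hpowerset : {F ∈ A.powerset | g • F ⊆ C} = (A ∩ g⁻¹ • C).powerset := by
    ext F
    simp only [mem_filter, mem_powerset, subset_inter_iff, smul_finset_subset_iff]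
  have hsubset : g • A ⊆ B ↔ A ∩ g⁻¹ • C = ∅ := by
    rw [← smul_finset_eq_empty (a := g), smul_finset_inter, smul_inv_smul,
      ← disjoint_iff_inter_eq_empty]
    exact ⟨fun h => hBC.mono_left h, fun h => h.left_le_of_le_sup_right hA⟩
  rw [← sum_filter, hpowerset, sum_powerset_neg_one_pow_card]
  exact if_congr hsubset rfl rfl

variable (Γ) [Fintype Γ]

def transporterCard (A B : Finset α) : ℕ := #{g : Γ | g • A ⊆ B}

def transporterSum (k : ℕ) (A C : Finset α) : ℕ :=
  ∑ F ∈ A.powersetCard k, transporterCard Γ F C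

variable {Γ}

theorem transporterCard_smul_left (h : Γ) (A B : Finset α) :
    transporterCard Γ (h • A) B = transporterCard Γ A B :=
  card_equiv (Equiv.mulRight h) (by simp [mul_smul])

theorem transporterCard_eq_zero_of_card_lt (h : #B < #A) : transporterCard Γ A B = 0 := by
  refine card_eq_zero.2 (filter_eq_empty_iff.2 fun g _ hg => ?_)
  simpa using (card_le_card hg).trans_lt h

theorem transporterCard_self_pos (B : Finset α) : 0 < transporterCard Γ B B :=
  card_pos.2 ⟨1, by simp⟩

theorem exists_smul_eq_of_transporterCard_pos (hcard : #A = #B)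
    (h : 0 < transporterCard Γ A B) : ∃ g : Γ, g • A = B := by
  obtain ⟨g, hg⟩ := card_pos.1 h
  exact ⟨g, eq_of_subset_of_card_le (mem_filter.1 hg).2 (by simp [hcard])⟩

theorem transporterSum_eq_zero_of_card_lt (h : #C < k) : transporterSum Γ k A C = 0 :=
  sum_eq_zero fun F hF =>
    transporterCard_eq_zero_of_card_lt (by rwa [(mem_powersetCard.1 hF).2])

theorem transporterSum_smul_left (h : Γ) (k : ℕ) (A C : Finset α) :
    transporterSum Γ k (h • A) C = transporterSum Γ k A C := by
  refine sum_nbij' (h⁻¹ • ·) (h • ·) ?_ ?_ ?_ ?_ ?_ <;> intro F hF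
  · simp_all [mem_powersetCard, ← subset_smul_finset_iff]
  · simp_all [mem_powersetCard]
  · simp
  · simp
  · conv_lhs => rw [← smul_inv_smul h F]
    exact transporterCard_smul_left h _ C

theorem transporterCard_eq_sum_powerset (hBC : Disjoint B C) (hA : ∀ g : Γ, g • A ⊆ B ∪ C) :
    (transporterCard Γ A B : ℤ) = ∑ F ∈ A.powerset, (-1 : ℤ) ^ #F * transporterCard Γ F C := by
  calc (transporterCard Γ A B : ℤ)
      = ∑ g : Γ, if g • A ⊆ B then 1 else 0 := by simp [transporterCard, sum_boole]
    _ = ∑ F ∈ A.powerset, ∑ g : Γ, if g • F ⊆ C then (-1 : ℤ) ^ #F else 0 := by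
      rw [sum_comm]
      exact sum_congr rfl fun g _ => ite_smul_finset_subset_eq_sum_powerset hBC (hA g)
    _ = ∑ F ∈ A.powerset, (-1 : ℤ) ^ #F * transporterCard Γ F C := by
      simp [transporterCard, ← sum_filter, mul_comm]

theorem transporterCard_eq_sum_range (hBC : Disjoint B C) (hA : ∀ g : Γ, g • A ⊆ B ∪ C) :
    (transporterCard Γ A B : ℤ) =
      ∑ k ∈ range (#A + 1), (-1 : ℤ) ^ k * transporterSum Γ k A C := by
  rw [transporterCard_eq_sum_powerset hBC hA, sum_powerset]
  refine sum_congr rfl fun k _ => ?_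
  rw [transporterSum, Nat.cast_sum, mul_sum]
  exact sum_congr rfl fun F hF => by rw [(mem_powersetCard.1 hF).2]

theorem transporterSum_eq_of_erase_smul_eq (φ : A ≃ B)
    (hdeck : ∀ a : A, ∃ g : Γ, g • A.erase a = B.erase (φ a)) (hk : k < #A) :
    transporterSum Γ k A C = transporterSum Γ k B C := by
  have hcard : #A = #B := by simpa using Fintype.card_congr φ
  have hdecks : ∑ a ∈ A, transporterSum Γ k (A.erase a) C =
      ∑ b ∈ B, transporterSum Γ k (B.erase b) C := by
    rw [← sum_coe_sort A, ← sum_coe_sort B, ← φ.sum_comp]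
    refine sum_congr rfl fun a _ => ?_
    obtain ⟨g, hg⟩ := hdeck a
    rw [← hg, transporterSum_smul_left]
  simp only [transporterSum, sum_sum_powersetCard_erase, ← hcard, smul_eq_mul] at hdecks
  exact Nat.eq_of_mul_eq_mul_left (Nat.sub_pos_of_lt hk) hdecks

theorem exists_smul_eq_of_erase_smul_eq {A B T : Finset α} (hT : ∀ g : Γ, g • T ⊆ T)
    (hA : A ⊆ T) (hB : B ⊆ T) (hdense : #T < 2 * #A) (φ : A ≃ B)
    (hdeck : ∀ a : A, ∃ g : Γ, g • A.erase a = B.erase (φ a)) : ∃ g : Γ, g • A = B := by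
  have hcard : #A = #B := by simpa using Fintype.card_congr φ
  have hC : #(T \ B) < #A := by rw [card_sdiff_of_subset hB]; omega
  have hcover : ∀ X : Finset α, X ⊆ T → ∀ g : Γ, g • X ⊆ B ∪ (T \ B) := fun X hX g => by
    rw [union_sdiff_of_subset hB]
    exact (smul_finset_subset_smul_finset_iff.2 hX).trans (hT g)
  have hsum : ∀ k, transporterSum Γ k A (T \ B) = transporterSum Γ k B (T \ B) := fun k => by
    rcases lt_or_ge k #A with hk | hk
    · exact transporterSum_eq_of_erase_smul_eq φ hdeck hk
    · rw [transporterSum_eq_zero_of_card_lt (by omega),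
        transporterSum_eq_zero_of_card_lt (by omega)]
  have htransporter : transporterCard Γ A B = transporterCard Γ B B := by
    have hAB := transporterCard_eq_sum_range disjoint_sdiff (hcover A hA)
    have hBB := transporterCard_eq_sum_range disjoint_sdiff (hcover B hB)
    rw [hcard] at hAB
    simp only [hsum] at hAB
    exact_mod_cast hAB.trans hBB.symm
  exact exists_smul_eq_of_transporterCard_pos hcard (htransporter ▸ transporterCard_self_pos B)

end Transporter

instance Sym2.instMulAction {M α : Type*} [Monoid M] [MulAction M α] : MulAction M (Sym2 α) where
  smul m := Sym2.map (m • ·)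
  one_smul z := by
    change Sym2.map _ z = z
    simp
  mul_smul m n z := by
    change Sym2.map _ z = Sym2.map _ (Sym2.map _ z)
    simp [Sym2.map_map, mul_smul]

theorem Sym2.smul_mk {M α : Type*} [Monoid M] [MulAction M α] (m : M) (a b : α) :
    m • s(a, b) = s(m • a, m • b) := rfl

namespace SimpleGraph

variable {V : Type*} {G H : SimpleGraph V}

theorem smul_edgeSet_eq_iff (σ : Equiv.Perm V) :
    σ • G.edgeSet = H.edgeSet ↔ ∀ a b, H.Adj (σ a) (σ b) ↔ G.Adj a b := by
  refine ⟨fun h a b => ?_, fun h => Set.ext fun z => ?_⟩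
  · rw [← mem_edgeSet, ← h, ← Equiv.Perm.smul_def, ← Equiv.Perm.smul_def, ← Sym2.smul_mk,
      Set.smul_mem_smul_set_iff, mem_edgeSet]
  · induction z using Sym2.ind with
    | _ a b => simp [Set.mem_smul_set_iff_inv_smul_mem, Sym2.smul_mk, ← h]

theorem Iso.smul_edgeSet (ψ : G ≃g H) : (ψ.toEquiv : Equiv.Perm V) • G.edgeSet = H.edgeSet :=
  (smul_edgeSet_eq_iff _).2 fun _ _ => ψ.map_rel_iff

theorem smul_edgeSet_top (σ : Equiv.Perm V) :
    σ • (⊤ : SimpleGraph V).edgeSet = (⊤ : SimpleGraph V).edgeSet :=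
  (smul_edgeSet_eq_iff σ).2 fun _ _ => by simp

theorem nonempty_iso_of_smul_edgeSet_eq {σ : Equiv.Perm V} (h : σ • G.edgeSet = H.edgeSet) :
    Nonempty (G ≃g H) :=
  ⟨⟨σ, (smul_edgeSet_eq_iff σ).1 h _ _⟩⟩

end SimpleGraph

open SimpleGraph

theorem stmt11_general {V : Type*} [Fintype V] [DecidableEq V]
    (G H : SimpleGraph V) [DecidableRel G.Adj] [DecidableRel H.Adj]
    (hdense : (Fintype.card V).choose 2 < 2 * G.edgeFinset.card)
    (φ : G.edgeFinset ≃ H.edgeFinset)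
    (hdeck : ∀ e : G.edgeFinset,
      Nonempty ((G.deleteEdges {(e : Sym2 V)}) ≃g (H.deleteEdges {((φ e : Sym2 V))}))) :
    Nonempty (G ≃g H) := by
  have hdeck_smul : ∀ e : G.edgeFinset, ∃ σ : Equiv.Perm V,
      σ • G.edgeFinset.erase e = H.edgeFinset.erase (φ e) := fun e => by
    obtain ⟨ψ⟩ := hdeck e
    refine ⟨ψ.toEquiv, coe_injective ?_⟩
    simpa using ψ.smul_edgeSet
  obtain ⟨σ, hσ⟩ := exists_smul_eq_of_erase_smul_eq
    (fun σ => by rw [← coe_subset, coe_smul_finset, coe_edgeFinset, smul_edgeSet_top])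
    (edgeFinset_subset_edgeFinset.2 le_top) (edgeFinset_subset_edgeFinset.2 le_top)
    (by rwa [card_edgeFinset_top_eq_card_choose_two]) φ hdeck_smul
  refine nonempty_iso_of_smul_edgeSet_eq (σ := σ) ?_
  rw [← coe_edgeFinset, ← coe_smul_finset, hσ, coe_edgeFinset]

/-- Lovász density criterion: if G has strictly more than half of the possible C(n,2)
edges, then G is edge reconstructible: any graph H on the same vertex set with the same
number of edges whose edge deck is isomorphic to that of G (witnessed by a bijection φ
between the edge sets with isomorphic corresponding edge-deleted cards) is isomorphic
to G. -/
theorem stmt11 {V : Type*} [Fintype V] [DecidableEq V]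
    (G H : SimpleGraph V) [DecidableRel G.Adj] [DecidableRel H.Adj]
    (hedges : G.edgeFinset.card = H.edgeFinset.card)
    (hdense : (Fintype.card V).choose 2 < 2 * G.edgeFinset.card)
    (φ : G.edgeFinset ≃ H.edgeFinset)
    (hdeck : ∀ e : G.edgeFinset,
      Nonempty ((G.deleteEdges {(e : Sym2 V)}) ≃g (H.deleteEdges {((φ e : Sym2 V))}))) :
    Nonempty (G ≃g H) :=
  stmt11_general G H hdense φ hdeck
end

section
/- If G is a 2-connected graph and an ear augmentation adds a path of length at least 2 (i.e., at least one new internal vertex) between two vertices x, y of G, then the resulting graph G + ε is 2-connected. -/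
/-- If G is 2-connected (at least 3 vertices, connected, no cutvertex) and H is obtained
from G by an ear augmentation adding a path of length at least 2 between distinct vertices
x and y of G (here H is a graph on V ⊕ Fin k, k ≥ 1, where the new vertices
inr 0, ..., inr (k-1) form a path joined to x at one end and to y at the other, and old
vertices keep the adjacency of G), then H is 2-connected. -/
theorem stmt16 {V : Type*} (G : SimpleGraph V)
    (hcard : 3 ≤ Nat.card V) (hconn : G.Connected)
    (h2conn : ∀ v : V, (G.induce {u : V | u ≠ v}).Connected)
    (x y : V) (hxy : x ≠ y)
    (k : ℕ) (hk : 1 ≤ k)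
    (H : SimpleGraph (V ⊕ Fin k))
    (hVV : ∀ u v : V, H.Adj (Sum.inl u) (Sum.inl v) ↔ G.Adj u v)
    (hII : ∀ i j : Fin k, H.Adj (Sum.inr i) (Sum.inr j) ↔
      ((i : ℕ) + 1 = (j : ℕ) ∨ (j : ℕ) + 1 = (i : ℕ)))
    (hVI : ∀ (u : V) (i : Fin k), H.Adj (Sum.inl u) (Sum.inr i) ↔
      ((u = x ∧ (i : ℕ) = 0) ∨ (u = y ∧ (i : ℕ) = k - 1))) :
    3 ≤ Nat.card (V ⊕ Fin k) ∧ H.Connected ∧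
      ∀ w : V ⊕ Fin k, (H.induce {z : V ⊕ Fin k | z ≠ w}).Connected := by
  have hVfin : Finite V := Nat.finite_of_card_ne_zero (by omega)
  -- chain from x to inr i inside an induced subgraph containing x and inr j for j ≤ i
  have chainx : ∀ (S : Set (V ⊕ Fin k)) (hx : Sum.inl x ∈ S) (n : ℕ) (i : Fin k),
      (i : ℕ) = n → ∀ (hS : ∀ j : Fin k, j ≤ i → Sum.inr j ∈ S),
      (H.induce S).Reachable ⟨Sum.inl x, hx⟩ ⟨Sum.inr i, hS i le_rfl⟩ := by
    intro S hx n
    induction n with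
    | zero =>
      intro i hi hS
      exact SimpleGraph.Adj.reachable (by simp [hVI, hi])
    | succ n ih =>
      intro i hi hS
      have hnk : n < k := by omega
      set i' : Fin k := ⟨n, hnk⟩ with hi'
      have hle : i' ≤ i := by simp [Fin.le_def, hi']; omega
      have h1 := ih i' rfl (fun j hj => hS j (le_trans hj hle))
      refine h1.trans (SimpleGraph.Adj.reachable ?_)
      simp only [SimpleGraph.comap_adj, Function.Embedding.coe_subtype]
      exact (hII i' i).mpr (Or.inl (by simp [hi', hi]))
  -- chain from y to inr i inside an induced subgraph containing y and inr j for j ≥ i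
  have chainy : ∀ (S : Set (V ⊕ Fin k)) (hy : Sum.inl y ∈ S) (n : ℕ) (i : Fin k),
      (k - 1) - (i : ℕ) = n → ∀ (hS : ∀ j : Fin k, i ≤ j → Sum.inr j ∈ S),
      (H.induce S).Reachable ⟨Sum.inl y, hy⟩ ⟨Sum.inr i, hS i le_rfl⟩ := by
    intro S hy n
    induction n with
    | zero =>
      intro i hi hS
      have : (i : ℕ) = k - 1 := by have := i.2; omega
      exact SimpleGraph.Adj.reachable (by simp [hVI, this])
    | succ n ih =>
      intro i hi hS
      have hnk : (i : ℕ) + 1 < k := by have := i.2; omega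
      set i' : Fin k := ⟨(i : ℕ) + 1, hnk⟩ with hi'
      have hle : i ≤ i' := by simp [Fin.le_def, hi']
      have h1 := ih i' (by simp [hi']; omega) (fun j hj => hS j (le_trans hle hj))
      refine h1.trans (SimpleGraph.Adj.reachable ?_)
      simp only [SimpleGraph.comap_adj, Function.Embedding.coe_subtype]
      exact (hII i' i).mpr (Or.inr (by simp [hi']))
  refine ⟨?_, ?_, ?_⟩
  · rw [Nat.card_sum]
    simp only [Nat.card_eq_fintype_card, Fintype.card_fin]
    omega
  · -- connectivity of H
    rw [SimpleGraph.connected_iff_exists_forall_reachable]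
    refine ⟨Sum.inl x, ?_⟩
    let f : G →g H := ⟨Sum.inl, fun h => (hVV _ _).mpr h⟩
    let sub : H.induce (Set.univ : Set (V ⊕ Fin k)) →g H :=
      ⟨Subtype.val, fun h => by simpa using h⟩
    rintro (u | i)
    · exact (hconn.preconnected x u).map f
    · have := chainx Set.univ (Set.mem_univ _) _ i rfl (fun j _ => Set.mem_univ _)
      exact this.map sub
  · intro w
    rw [SimpleGraph.connected_iff_exists_forall_reachable]
    rcases w with v | i
    · -- removed an old vertex v
      by_cases hvx : v = x
      · subst hvx
        have hyS : Sum.inl y ∈ {z : V ⊕ Fin k | z ≠ Sum.inl v} := by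
          simp [Set.mem_setOf_eq, hxy.symm]
        refine ⟨⟨Sum.inl y, hyS⟩, ?_⟩
        let f : (G.induce {u : V | u ≠ v}) →g (H.induce {z : V ⊕ Fin k | z ≠ Sum.inl v}) :=
          ⟨fun u => ⟨Sum.inl u.1, by simp only [Set.mem_setOf_eq, ne_eq, Sum.inl.injEq]; exact u.2⟩, fun {a b} h => by
            simp only [SimpleGraph.comap_adj, Function.Embedding.coe_subtype] at h ⊢
            exact (hVV _ _).mpr h⟩
        rintro ⟨u | j, hz⟩
        · have hu : u ≠ v := by simpa using hz
          have := ((h2conn v).preconnected ⟨y, hxy.symm⟩ ⟨u, hu⟩).map f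
          exact this
        · exact chainy _ hyS _ j rfl (fun j' _ => by simp)
      · have hxS : Sum.inl x ∈ {z : V ⊕ Fin k | z ≠ Sum.inl v} := by
          simp [Set.mem_setOf_eq, Ne.symm hvx]
        refine ⟨⟨Sum.inl x, hxS⟩, ?_⟩
        let f : (G.induce {u : V | u ≠ v}) →g (H.induce {z : V ⊕ Fin k | z ≠ Sum.inl v}) :=
          ⟨fun u => ⟨Sum.inl u.1, by simp only [Set.mem_setOf_eq, ne_eq, Sum.inl.injEq]; exact u.2⟩, fun {a b} h => by
            simp only [SimpleGraph.comap_adj, Function.Embedding.coe_subtype] at h ⊢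
            exact (hVV _ _).mpr h⟩
        rintro ⟨u | j, hz⟩
        · have hu : u ≠ v := by simpa using hz
          exact ((h2conn v).preconnected ⟨x, Ne.symm hvx⟩ ⟨u, hu⟩).map f
        · exact chainx _ hxS _ j rfl (fun j' _ => by simp)
    · -- removed an internal ear vertex i
      have hxS : Sum.inl x ∈ {z : V ⊕ Fin k | z ≠ Sum.inr i} := by simp
      have hyS : Sum.inl y ∈ {z : V ⊕ Fin k | z ≠ Sum.inr i} := by simp
      refine ⟨⟨Sum.inl x, hxS⟩, ?_⟩
      let f : G →g (H.induce {z : V ⊕ Fin k | z ≠ Sum.inr i}) :=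
        ⟨fun u => ⟨Sum.inl u, by simp⟩, fun {a b} h => by
          simp only [SimpleGraph.comap_adj, Function.Embedding.coe_subtype]
          exact (hVV _ _).mpr h⟩
      rintro ⟨u | j, hz⟩
      · exact (hconn.preconnected x u).map f
      · have hji : j ≠ i := by simpa using hz
        rcases lt_or_gt_of_ne hji with hlt | hgt
        · exact chainx _ hxS _ j rfl (fun j' hj' => by
            simp only [Set.mem_setOf_eq, ne_eq, Sum.inr.injEq]
            intro hc; subst hc; exact absurd (lt_of_le_of_lt hj' hlt) (lt_irrefl _))
        · have h1 := (hconn.preconnected x y).map f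
          have h2 := chainy _ hyS _ j rfl (fun j' hj' => by
            simp only [Set.mem_setOf_eq, ne_eq, Sum.inr.injEq]
            intro hc; subst hc; exact absurd (lt_of_lt_of_le hgt hj') (lt_irrefl _))
          exact h1.trans h2
end

section
/- If a graph G contains an edge e = uv such that both u and v have degree 2 in G, neither u nor v has a neighbor of degree 1, and G - e has exactly two vertices of degree 1 (namely u and v), then G is determined by G - e: any graph H on the same vertex set with H - f isomorphic to G - e for some edge f, such that H has minimum degree at least 2, satisfies H ≅ G. -/
open SimpleGraph

/-- If G has an edge e = uv with both endpoints of degree 2, neither endpoint has a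
neighbor of degree 1, and G - e has exactly two vertices of degree 1 (namely u and v),
then G is determined by G - e: any graph H on the same vertex set with minimum degree at
least 2 having an edge f with H - f isomorphic to G - e satisfies H ≅ G. -/
theorem stmt19 {V : Type*} [Finite V] (G : SimpleGraph V) (u v : V)
    (huv : G.Adj u v)
    (hdu : Nat.card (G.neighborSet u) = 2)
    (hdv : Nat.card (G.neighborSet v) = 2)
    (hnu : ∀ w : V, G.Adj u w → Nat.card (G.neighborSet w) ≠ 1)
    (hnv : ∀ w : V, G.Adj v w → Nat.card (G.neighborSet w) ≠ 1)
    (hcard1 : ∀ w : V,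
      Nat.card ((G.deleteEdges {s(u, v)}).neighborSet w) = 1 ↔ (w = u ∨ w = v))
    (H : SimpleGraph V) (hHmin : ∀ w : V, 2 ≤ Nat.card (H.neighborSet w))
    (f : Sym2 V) (hf : f ∈ H.edgeSet)
    (hiso : Nonempty ((H.deleteEdges {f}) ≃g (G.deleteEdges {s(u, v)}))) :
    Nonempty (H ≃g G) := by
  obtain ⟨φ⟩ := hiso
  induction f using Sym2.ind with
  | _ a b =>
  rw [SimpleGraph.mem_edgeSet] at hf
  have huvne : u ≠ v := huv.ne
  -- transport degrees along φ
  have hdeg : ∀ w : V, Nat.card ((H.deleteEdges {s(a, b)}).neighborSet w) = 1 ↔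
      (φ w = u ∨ φ w = v) := by
    intro w
    rw [Nat.card_congr (φ.mapNeighborSet w), hcard1]
  -- degree-1 vertices of H - f must be endpoints of f
  have hend : ∀ w : V, Nat.card ((H.deleteEdges {s(a, b)}).neighborSet w) = 1 →
      w = a ∨ w = b := by
    intro w h1
    by_contra hc
    push_neg at hc
    have hset : (H.deleteEdges {s(a, b)}).neighborSet w = H.neighborSet w := by
      ext x
      simp only [mem_neighborSet, deleteEdges_adj, Set.mem_singleton_iff]
      constructor
      · rintro ⟨h, -⟩; exact h
      · intro h
        refine ⟨h, ?_⟩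
        rw [Sym2.eq_iff]
        rintro (⟨rfl, rfl⟩ | ⟨rfl, rfl⟩)
        · exact hc.1 rfl
        · exact hc.2 rfl
    rw [hset] at h1
    have := hHmin w
    omega
  have hpa : φ.symm u = a ∨ φ.symm u = b :=
    hend _ ((hdeg _).2 (Or.inl (φ.apply_symm_apply u)))
  have hpb : φ.symm v = a ∨ φ.symm v = b :=
    hend _ ((hdeg _).2 (Or.inr (φ.apply_symm_apply v)))
  have hkey : s(φ a, φ b) = s(u, v) := by
    rcases hpa with h1 | h1 <;> rcases hpb with h2 | h2
    · exact absurd (φ.symm.injective (h1.trans h2.symm)) huvne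
    · have ha : φ a = u := (congrArg (⇑φ) h1).symm.trans (φ.apply_symm_apply u)
      have hb : φ b = v := (congrArg (⇑φ) h2).symm.trans (φ.apply_symm_apply v)
      rw [ha, hb]
    · have ha : φ a = v := (congrArg (⇑φ) h2).symm.trans (φ.apply_symm_apply v)
      have hb : φ b = u := (congrArg (⇑φ) h1).symm.trans (φ.apply_symm_apply u)
      rw [ha, hb, Sym2.eq_swap]
    · exact absurd (φ.symm.injective (h1.trans h2.symm)) huvne
  have hG : ∀ p q : V, G.Adj p q ↔
      (G.deleteEdges {s(u, v)}).Adj p q ∨ s(p, q) = s(u, v) := by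
    intro p q
    simp only [deleteEdges_adj, Set.mem_singleton_iff]
    constructor
    · intro h
      by_cases he : s(p, q) = s(u, v)
      · exact Or.inr he
      · exact Or.inl ⟨h, he⟩
    · rintro (⟨h, -⟩ | he)
      · exact h
      · rw [Sym2.eq_iff] at he
        rcases he with ⟨rfl, rfl⟩ | ⟨rfl, rfl⟩
        · exact huv
        · exact huv.symm
  have hH : ∀ p q : V, H.Adj p q ↔
      (H.deleteEdges {s(a, b)}).Adj p q ∨ s(p, q) = s(a, b) := by
    intro p q
    simp only [deleteEdges_adj, Set.mem_singleton_iff]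
    constructor
    · intro h
      by_cases he : s(p, q) = s(a, b)
      · exact Or.inr he
      · exact Or.inl ⟨h, he⟩
    · rintro (⟨h, -⟩ | he)
      · exact h
      · rw [Sym2.eq_iff] at he
        rcases he with ⟨rfl, rfl⟩ | ⟨rfl, rfl⟩
        · exact hf
        · exact hf.symm
  refine ⟨⟨φ.toEquiv, ?_⟩⟩
  intro x y
  show G.Adj (φ x) (φ y) ↔ H.Adj x y
  rw [hG, hH]
  have hs : s(φ x, φ y) = s(u, v) ↔ s(x, y) = s(a, b) := by
    constructor
    · intro h
      have h2 := h.trans hkey.symm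
      rw [Sym2.eq_iff] at h2 ⊢
      rcases h2 with ⟨e1, e2⟩ | ⟨e1, e2⟩
      · exact Or.inl ⟨φ.injective e1, φ.injective e2⟩
      · exact Or.inr ⟨φ.injective e1, φ.injective e2⟩
    · intro h
      rw [Sym2.eq_iff] at h
      rcases h with ⟨rfl, rfl⟩ | ⟨rfl, rfl⟩
      · exact hkey
      · exact Sym2.eq_swap.trans hkey
  rw [hs, φ.map_rel_iff]
end
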